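/- Let (X,d) be a metric space, let A, B, C, D be points of X, and let L ≥ 0. Suppose d(A,B) = d(B,C) = d(A,C) = L and d(B,D) + d(D,C) = d(B,C). If moreover d(A,D) = L/2, then d(B,D) = d(C,D) = L/2, and D lies metrically between A and B and between A and C, i.e. d(A,D) + d(D,B) = d(A,B) and d(A,D) + d(D,C) = d(A,C). -/

import Mathlib

theorem equilateral_dist_eq_half_rigidity_general
    {X : Type*} [MetricSpace X] (A B C D : X) (L : ℝ)
    (hAB : dist A B = L) (hBC : dist B C = L) (hAC : dist A C = L)
    (hD : dist B D + dist D C = dist B C)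
    (hAD : dist A D = L / 2) :
    dist B D = L / 2 ∧ dist C D = L / 2 ∧
      dist A D + dist D B = dist A B ∧ dist A D + dist D C = dist A C := by
  rw [dist_comm D C] at hD ⊢
  rw [dist_comm D B]
  -- The triangle inequalities through `D` give `dist B D, dist C D ≥ L / 2`, and these sum to `L`.
  have hB := dist_triangle_right A B D
  have hC := dist_triangle_right A C D
  refine ⟨?_, ?_, ?_, ?_⟩ <;> linarith

/-- Equality case in Lemma 3.1: if a point `D` metrically between `B` and `C` on an
equilateral triangle of side length `L` satisfies `dist A D = L / 2`, then `D` is the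
metric midpoint of `B C` and lies metrically between `A` and `B` and between `A` and `C`. -/
theorem equilateral_dist_eq_half_rigidity
    {X : Type*} [MetricSpace X] (A B C D : X) (L : ℝ) (hL : 0 ≤ L)
    (hAB : dist A B = L) (hBC : dist B C = L) (hAC : dist A C = L)
    (hD : dist B D + dist D C = dist B C)
    (hAD : dist A D = L / 2) :
    dist B D = L / 2 ∧ dist C D = L / 2 ∧
      dist A D + dist D B = dist A B ∧ dist A D + dist D C = dist A C :=
  equilateral_dist_eq_half_rigidity_general A B C D L hAB hBC hAC hD hAD
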